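/- Let λ > 2. For every z ∈ 𝓔₁ one has λz − 1 ≠ 0, and the Möbius transformation 𝓣.z = z/(λz − 1), given by the matrix 𝓣 = !![1, 0; λ, -1], maps 𝓔₁ bijectively onto 𝓔₁. -/

import Mathlib

/-! The disc `𝓔₁` is the negativity set `{Q < 0}` of the real quadratic form
`Q(z) = (λ² - 4)|z|² - 4λ Re z + 4`, and `Q(z / (λz - 1)) · |λz - 1|² = Q(z)`. So the involution
`z ↦ z / (λz - 1)` preserves `{Q < 0}`, and its pole `1/λ` lies outside, since `Q(1/λ) = 1 - 4/λ² ≥ 0`. -/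

open Complex

def discForm (lam : ℝ) (z : ℂ) : ℝ :=
  (lam ^ 2 - 4) * normSq z - 4 * lam * z.re + 4

lemma discForm_div_mul_normSq (lam : ℝ) {z : ℂ} (hz : (lam : ℂ) * z - 1 ≠ 0) :
    discForm lam (z / (lam * z - 1)) * normSq (lam * z - 1) = discForm lam z := by
  have hn : normSq ((lam : ℂ) * z - 1) ≠ 0 := normSq_eq_zero.not.mpr hz
  have hre : (z / (lam * z - 1)).re * normSq ((lam : ℂ) * z - 1) = lam * normSq z - z.re := by
    rw [div_re]
    field_simp
    simp only [sub_re, sub_im, mul_re, mul_im, ofReal_re, ofReal_im, one_re, one_im, normSq_apply]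
    ring
  have hsq : normSq (z / (lam * z - 1)) * normSq ((lam : ℂ) * z - 1) = normSq z := by
    rw [map_div₀, div_mul_cancel₀ _ hn]
  have hden : normSq ((lam : ℂ) * z - 1) = lam ^ 2 * normSq z - 2 * lam * z.re + 1 := by
    simp only [normSq_apply, sub_re, sub_im, mul_re, mul_im, ofReal_re, ofReal_im, one_re, one_im]
    ring
  unfold discForm
  linear_combination (lam ^ 2 - 4) * hsq - 4 * lam * hre + 4 * hden

lemma discForm_nonneg_of_mul_sub_one_eq_zero {lam : ℝ} (hlam : 4 ≤ lam ^ 2) {z : ℂ}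
    (hz : (lam : ℂ) * z - 1 = 0) : 0 ≤ discForm lam z := by
  have hlam0 : lam ≠ 0 := by rintro rfl; norm_num at hlam
  have hz' : z = ((lam⁻¹ : ℝ) : ℂ) := by
    push_cast
    exact eq_inv_of_mul_eq_one_right (sub_eq_zero.mp hz)
  have hlam2 : 0 < lam ^ 2 := by positivity
  rw [hz', discForm, normSq_ofReal, ofReal_re]
  field_simp
  exact div_nonneg (by linarith) hlam2.le

lemma mul_sub_one_ne_zero_of_discForm_neg {lam : ℝ} (hlam : 4 ≤ lam ^ 2) {z : ℂ}
    (hz : discForm lam z < 0) : (lam : ℂ) * z - 1 ≠ 0 :=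
  fun h => (discForm_nonneg_of_mul_sub_one_eq_zero hlam h).not_gt hz

lemma mem_ball_iff_discForm_neg {lam : ℝ} (hlam : 4 < lam ^ 2) (z : ℂ) :
    z ∈ Metric.ball (((2 * lam / ((lam + 2) * (lam - 2)) : ℝ)) : ℂ)
      (4 / ((lam + 2) * (lam - 2))) ↔ discForm lam z < 0 := by
  have hA : 0 < (lam + 2) * (lam - 2) := by nlinarith
  have hA₁ : lam + 2 ≠ 0 := by nlinarith
  have hA₂ : lam - 2 ≠ 0 := by nlinarith
  have hr : 0 < 4 / ((lam + 2) * (lam - 2)) := by positivity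
  have key : normSq (z - ((2 * lam / ((lam + 2) * (lam - 2)) : ℝ) : ℂ))
      - (4 / ((lam + 2) * (lam - 2))) ^ 2 = discForm lam z / ((lam + 2) * (lam - 2)) := by
    simp only [discForm, normSq_apply, sub_re, sub_im, ofReal_re, ofReal_im, sub_zero]
    field_simp
    ring
  rw [Metric.mem_ball, dist_eq, ← sq_lt_sq₀ (norm_nonneg _) hr.le, Complex.sq_norm, ← sub_neg,
    key, div_lt_iff₀ hA, zero_mul]

lemma div_mul_sub_one_apply_twice {K : Type*} [Field K] (a : K) {z : K} (hz : a * z - 1 ≠ 0) :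
    z / (a * z - 1) / (a * (z / (a * z - 1)) - 1) = z := by
  have h : a * (z / (a * z - 1)) - 1 = 1 / (a * z - 1) := by
    field_simp
    ring
  rw [h, div_div_eq_mul_div, div_one, div_mul_cancel₀ _ hz]

theorem T_maps_E1_bijectively
    (lam : ℝ) (hlam : 2 < lam)
    (E1 : Set ℂ)
    (hE1 : E1 = Metric.ball ((((2 * lam) / ((lam + 2) * (lam - 2)) : ℝ)) : ℂ)
      (4 / ((lam + 2) * (lam - 2)))) :
    (∀ z ∈ E1, (lam : ℂ) * z - 1 ≠ 0) ∧
    Set.BijOn (fun z : ℂ => z / ((lam : ℂ) * z - 1)) E1 E1 := by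
  have hlam2 : 4 < lam ^ 2 := by nlinarith
  have hmem : ∀ z, z ∈ E1 ↔ discForm lam z < 0 := fun z =>
    hE1 ▸ mem_ball_iff_discForm_neg hlam2 z
  have hpole : ∀ z ∈ E1, (lam : ℂ) * z - 1 ≠ 0 := fun z hz =>
    mul_sub_one_ne_zero_of_discForm_neg hlam2.le ((hmem z).1 hz)
  have hmaps : Set.MapsTo (fun z : ℂ => z / ((lam : ℂ) * z - 1)) E1 E1 := by
    intro z hz
    have hQ := (hmem z).1 hz
    rw [← discForm_div_mul_normSq lam (hpole z hz)] at hQ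
    exact (hmem _).2 (neg_of_mul_neg_left hQ (normSq_nonneg _))
  have hinv : Set.InvOn (fun z : ℂ => z / ((lam : ℂ) * z - 1))
      (fun z : ℂ => z / ((lam : ℂ) * z - 1)) E1 E1 :=
    ⟨fun z hz => div_mul_sub_one_apply_twice _ (hpole z hz),
      fun z hz => div_mul_sub_one_apply_twice _ (hpole z hz)⟩
  exact ⟨hpole, hinv.bijOn hmaps hmaps⟩
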